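/- Let β ∈ Z_2^× and let η ∈ Z_2^× satisfy η ≡ β (mod 4) and η ≢ β (mod 8). Then 2η is not represented by the quadratic form x^2 + 2β y^2 - 4 z^2 over Z_2. -/

import Mathlib

/-!
Halving the equation `2η = x² + 2βy² - 4z²` (where `x` must be even) gives
`η = 2x² + βy² - 2z²`, so `y` is odd because `η` is a unit. Then `y² ≡ 1 (mod 8)` and
`η - β ≡ 2(x² - z²) (mod 8)`. Since `4 ∣ η - β`, the difference of squares `x² - z²` is even,
hence divisible by `4`, which forces `8 ∣ η - β`.
-/

namespace PadicInt

theorem prime_two : Prime (2 : ℤ_[2]) := by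
  exact_mod_cast prime_p (p := 2)

theorem even_or_odd (a : ℤ_[2]) : Even a ∨ Odd a := by
  obtain ⟨n, hn, ha⟩ := exists_mem_range a
  rw [maximalIdeal_eq_span_p, Ideal.mem_span_singleton] at ha
  interval_cases n
  · exact Or.inl (even_iff_two_dvd.mpr (by simpa using ha))
  · obtain ⟨k, hk⟩ := ha
    exact Or.inr ⟨k, by push_cast at hk; linear_combination hk⟩

theorem eight_dvd_sq_sub_one_of_odd {y : ℤ_[2]} (hy : Odd y) : 8 ∣ y ^ 2 - 1 := by
  obtain ⟨k, rfl⟩ := hy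
  obtain ⟨m, hm⟩ : Even (k * (k + 1)) := by
    rcases even_or_odd k with hk | hk
    · exact hk.mul_right _
    · exact hk.add_one.mul_left _
  exact ⟨m, by linear_combination 4 * hm⟩

theorem four_dvd_sq_sub_sq_of_two_dvd {a b : ℤ_[2]} (h : 2 ∣ a ^ 2 - b ^ 2) :
    4 ∣ a ^ 2 - b ^ 2 := by
  -- `a - b` and `a + b` have the same parity, and one of them is even.
  obtain ⟨s, hs⟩ : 2 ∣ a - b := by
    rcases prime_two.dvd_or_dvd (sq_sub_sq a b ▸ h) with ⟨t, ht⟩ | h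
    · exact ⟨t - b, by linear_combination ht⟩
    · exact h
  exact ⟨s * (s + b), by linear_combination (a + b + 2 * s) * hs⟩

end PadicInt

open PadicInt in
theorem two_eta_not_represented_general (β η : ℤ_[2]) (hη : IsUnit η)
    (h4 : (4 : ℤ_[2]) ∣ (η - β)) (h8 : ¬ (8 : ℤ_[2]) ∣ (η - β)) :
    ¬ ∃ x y z : ℤ_[2], 2 * η = x ^ 2 + 2 * β * y ^ 2 - 4 * z ^ 2 := by
  rintro ⟨x, y, z, h⟩
  obtain ⟨x, rfl⟩ : 2 ∣ x :=
    prime_two.dvd_of_dvd_pow (n := 2) ⟨η - β * y ^ 2 + 2 * z ^ 2, by linear_combination -h⟩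
  have hη_eq : η = 2 * x ^ 2 + β * y ^ 2 - 2 * z ^ 2 :=
    mul_left_cancel₀ two_ne_zero (by linear_combination h)
  have hy : Odd y := (even_or_odd y).resolve_left fun ⟨s, hs⟩ =>
    prime_two.not_isUnit <| isUnit_of_dvd_unit
      ⟨x ^ 2 + 2 * β * s ^ 2 - z ^ 2, by linear_combination hη_eq + β * (y + 2 * s) * hs⟩ hη
  obtain ⟨w, hw⟩ := eight_dvd_sq_sub_one_of_odd hy
  obtain ⟨v, hv⟩ := h4
  have hxz : 2 ∣ x ^ 2 - z ^ 2 :=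
    ⟨v - 2 * β * w, mul_left_cancel₀ two_ne_zero (by linear_combination hv - β * hw - hη_eq)⟩
  obtain ⟨u, hu⟩ := four_dvd_sq_sub_sq_of_two_dvd hxz
  exact h8 ⟨β * w + u, by linear_combination hη_eq + β * hw + 2 * hu⟩

/-- If `β, η` are `2`-adic units with `η ≡ β (mod 4)` and `η ≢ β (mod 8)`,
then `2η` is not represented by `x² + 2β y² - 4 z²` over `ℤ₂`. -/
theorem two_eta_not_represented (β η : ℤ_[2]) (hβ : IsUnit β) (hη : IsUnit η)
    (h4 : (4 : ℤ_[2]) ∣ (η - β)) (h8 : ¬ (8 : ℤ_[2]) ∣ (η - β)) :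
    ¬ ∃ x y z : ℤ_[2], 2 * η = x ^ 2 + 2 * β * y ^ 2 - 4 * z ^ 2 :=
  two_eta_not_represented_general β η hη h4 h8
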